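/- The coefficients of the Mahonian polynomial M_d(q,t) = ∑_{σ∈S_d} q^{inv(σ)} t^{maj(σ)} and of the type-BC Weyl-Mahonian polynomial M_d^±(q,t) = ∑_{σ∈S_d^±} q^{l^±(σ)} t^{Wmaj(σ)} agree in all monomials q^a t^b with total degree a+b ≤ d. -/

import Mathlib

open Finset MvPolynomial

/-- A signed permutation of `{±1, …, ±d}` is encoded by an (unsigned)
permutation of `Fin d` together with a sign vector; `sVal σ i` is the value
`σ(i) ∈ {±1, …, ±d}` at `i ∈ {1, …, d}` (0-indexed). -/
def sVal {d : ℕ} (σ : Equiv.Perm (Fin d) × (Fin d → Bool)) (i : Fin d) : ℤ :=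
  (if σ.2 i then -1 else 1) * ((σ.1 i : ℕ) + 1)

/-- Number of inversions of a signed permutation:
pairs `i < j` with `σ(i)σ(j)(σ(i)-σ(j)) > 0`. -/
def sInv {d : ℕ} (σ : Equiv.Perm (Fin d) × (Fin d → Bool)) : ℕ :=
  (Finset.univ.filter (fun p : Fin d × Fin d => p.1 < p.2 ∧
    0 < sVal σ p.1 * sVal σ p.2 * (sVal σ p.1 - sVal σ p.2))).card

/-- Number of `i ∈ {1, …, d}` with `σ(i) < 0`. -/
def sNeg {d : ℕ} (σ : Equiv.Perm (Fin d) × (Fin d → Bool)) : ℕ :=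
  (Finset.univ.filter (fun i : Fin d => sVal σ i < 0)).card

/-- The type-BC (Coxeter) length
`l^±(σ) = #inversions + ∑_{σ(i)<0} (d + 1 + σ(i))`. -/
def sLenBC {d : ℕ} (σ : Equiv.Perm (Fin d) × (Fin d → Bool)) : ℕ :=
  sInv σ + ∑ i ∈ Finset.univ.filter (fun i : Fin d => sVal σ i < 0),
    ((d : ℤ) + 1 + sVal σ i).toNat

/-- The Weyl-Major index
`Wmaj(σ) = ∑_{0<i<d, σ(i)>σ(i+1)} i + #{i : σ(i) < 0}`. -/
def sWmaj {d : ℕ} (σ : Equiv.Perm (Fin d) × (Fin d → Bool)) : ℕ :=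
  (∑ i ∈ Finset.range d, if h : i + 1 < d then
      (if sVal σ ⟨i + 1, h⟩ < sVal σ ⟨i, Nat.lt_of_succ_lt h⟩ then i + 1 else 0)
    else 0) + sNeg σ

/-- Number of inversions of a permutation of `Fin d`. -/
def invPerm {d : ℕ} (σ : Equiv.Perm (Fin d)) : ℕ :=
  (Finset.univ.filter (fun p : Fin d × Fin d => p.1 < p.2 ∧ σ p.2 < σ p.1)).card

/-- Major index of a permutation of `Fin d` (sum of 1-based descent positions). -/
def majPerm {d : ℕ} (σ : Equiv.Perm (Fin d)) : ℕ :=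
  ∑ i ∈ Finset.range d, if h : i + 1 < d then
    (if σ ⟨i + 1, h⟩ < σ ⟨i, Nat.lt_of_succ_lt h⟩ then i + 1 else 0) else 0

/-- The Mahonian polynomial `M_d(q,t)` as a polynomial in `q = X 0`, `t = X 1`. -/
noncomputable def MdPoly (d : ℕ) : MvPolynomial (Fin 2) ℤ :=
  ∑ σ : Equiv.Perm (Fin d), X 0 ^ invPerm σ * X 1 ^ majPerm σ

/-- The type-BC Weyl-Mahonian polynomial `M_d^±(q,t)` in `q = X 0`, `t = X 1`. -/
noncomputable def MdPMPoly (d : ℕ) : MvPolynomial (Fin 2) ℤ :=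
  ∑ σ : Equiv.Perm (Fin d) × (Fin d → Bool), X 0 ^ sLenBC σ * X 1 ^ sWmaj σ

/-! If some sign of `σ` is negative, let `i₀` be the position of the smallest value of `σ`,
which is negative. Every position after `i₀` carries either a positive value, forming an
inversion with `i₀`, or a negative one, and every negative value (`σ(i₀)` included) adds at
least one to the sign part of `l^±`; hence `l^±(σ) ≥ d - i₀`. As `σ(i₀)` is the minimum, `i₀`
is a descent position when `i₀ > 0`, so `Wmaj(σ) ≥ i₀ + #{i : σ(i) < 0} ≥ i₀ + 1`. Thus
`l^±(σ) + Wmaj(σ) > d`, so in total degree `≤ d` only the unsigned permutations contribute to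
`M_d^±`, and on them `l^±` and `Wmaj` are `inv` and `maj`. -/

section SignedPerm

variable {d : ℕ}

lemma sVal_neg_iff (σ : Equiv.Perm (Fin d) × (Fin d → Bool)) (i : Fin d) :
    sVal σ i < 0 ↔ σ.2 i = true := by
  unfold sVal
  cases σ.2 i <;> simp <;> omega

lemma natAbs_sVal (σ : Equiv.Perm (Fin d) × (Fin d → Bool)) (i : Fin d) :
    (sVal σ i).natAbs = σ.1 i + 1 := by
  unfold sVal
  cases σ.2 i <;> simp <;> omega

lemma sVal_ne_zero (σ : Equiv.Perm (Fin d) × (Fin d → Bool)) (i : Fin d) : sVal σ i ≠ 0 :=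
  fun h => by simpa [h] using natAbs_sVal σ i

lemma sVal_injective (σ : Equiv.Perm (Fin d) × (Fin d → Bool)) : Function.Injective (sVal σ) :=
  fun i j h => σ.1.injective <| Fin.ext <| by
    simpa only [natAbs_sVal, Nat.add_right_cancel_iff] using congrArg Int.natAbs h

lemma neg_le_sVal (σ : Equiv.Perm (Fin d) × (Fin d → Bool)) (i : Fin d) :
    -(d : ℤ) ≤ sVal σ i := by
  have := natAbs_sVal σ i
  have := (σ.1 i).isLt
  omega

lemma sInv_add_sNeg_le_sLenBC (σ : Equiv.Perm (Fin d) × (Fin d → Bool)) :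
    sInv σ + sNeg σ ≤ sLenBC σ := by
  unfold sLenBC sNeg
  gcongr
  rw [card_eq_sum_ones]
  refine sum_le_sum fun i _ => ?_
  have := neg_le_sVal σ i
  omega

lemma le_sInv_add_sNeg_add (σ : Equiv.Perm (Fin d) × (Fin d → Bool)) {i : Fin d}
    (hi : sVal σ i < 0) : d ≤ sInv σ + sNeg σ + i := by
  set P := {j ∈ Ioi i | 0 < sVal σ j}
  have hP : #P ≤ sInv σ := by
    refine card_le_card_of_injOn (fun j => (i, j)) (fun j hj => ?_)
      (fun _ _ _ _ h => congrArg Prod.snd h)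
    obtain ⟨hij, hj⟩ := mem_filter.1 hj
    simp only [coe_filter, mem_univ, true_and, Set.mem_ofPred_eq]
    exact ⟨mem_Ioi.1 hij, mul_pos_of_neg_of_neg (mul_neg_of_neg_of_pos hi hj) (by linarith)⟩
  have hcover : Ici i ⊆ P ∪ ({j | sVal σ j < 0} : Finset (Fin d)) := by
    intro j hj
    rcases (sVal_ne_zero σ j).lt_or_gt with hneg | hpos
    · simp [hneg]
    · have hij : i < j := (mem_Ici.1 hj).lt_of_ne fun h => by subst h; linarith
      simp [P, hij, hpos]
  have := (card_le_card hcover).trans (card_union_le _ _)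
  rw [Fin.card_Ici] at this
  unfold sNeg
  omega

lemma add_sNeg_le_sWmaj_of_forall_lt (σ : Equiv.Perm (Fin d) × (Fin d → Bool)) {i : Fin d}
    (hmin : ∀ j, j ≠ i → sVal σ i < sVal σ j) : i + sNeg σ ≤ sWmaj σ := by
  unfold sWmaj
  gcongr
  obtain ⟨_ | c, hc⟩ := i
  · exact Nat.zero_le _
  · have hdesc : sVal σ ⟨c + 1, hc⟩ < sVal σ ⟨c, by omega⟩ := hmin _ (by simp [Fin.ext_iff])
    refine le_trans ?_
      (single_le_sum (fun _ _ => Nat.zero_le _) (mem_range.2 (by omega : c < d)))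
    dsimp only
    rw [dif_pos hc, if_pos hdesc]

theorem lt_sLenBC_add_sWmaj (σ : Equiv.Perm (Fin d) × (Fin d → Bool))
    (hσ : σ.2 ≠ fun _ => false) : d < sLenBC σ + sWmaj σ := by
  obtain ⟨i, hi⟩ : ∃ i, σ.2 i = true := by simpa [funext_iff] using hσ
  obtain ⟨i₀, -, hi₀⟩ := exists_min_image univ (sVal σ) ⟨i, mem_univ i⟩
  have hneg : sVal σ i₀ < 0 := (hi₀ i (mem_univ i)).trans_lt ((sVal_neg_iff σ i).2 hi)
  have hmin : ∀ j, j ≠ i₀ → sVal σ i₀ < sVal σ j := fun j hj =>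
    (hi₀ j (mem_univ j)).lt_of_ne fun h => hj (sVal_injective σ h).symm
  have hsNeg : 0 < sNeg σ := card_pos.2 ⟨i₀, by simp [hneg]⟩
  have := le_sInv_add_sNeg_add σ hneg
  have := add_sNeg_le_sWmaj_of_forall_lt σ hmin
  have := sInv_add_sNeg_le_sLenBC σ
  omega

lemma sVal_unsigned (τ : Equiv.Perm (Fin d)) (i : Fin d) :
    sVal (τ, fun _ => false) i = τ i + 1 := by
  simp [sVal]

lemma sInv_unsigned (τ : Equiv.Perm (Fin d)) : sInv (τ, fun _ => false) = invPerm τ := by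
  unfold sInv invPerm
  congr 1
  refine filter_congr fun p _ => and_congr_right fun _ => ?_
  have h₁ := sVal_unsigned τ p.1
  have h₂ := sVal_unsigned τ p.2
  rw [mul_pos_iff_of_pos_left (mul_pos (by omega) (by omega)), sub_pos, Fin.lt_def]
  omega

lemma sLenBC_unsigned (τ : Equiv.Perm (Fin d)) : sLenBC (τ, fun _ => false) = invPerm τ := by
  simp only [sLenBC, sInv_unsigned, sVal_neg_iff, Bool.false_eq_true, filter_false, sum_empty,
    add_zero]

lemma sWmaj_unsigned (τ : Equiv.Perm (Fin d)) : sWmaj (τ, fun _ => false) = majPerm τ := by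
  simp only [sWmaj, sNeg, sVal_neg_iff, Bool.false_eq_true, filter_false, card_empty, add_zero]
  simp [majPerm, sVal_unsigned]

end SignedPerm

lemma coeff_sum_X_pow_mul_X_pow {R ι : Type*} [CommSemiring R] (s : Finset ι) (f g : ι → ℕ)
    (a b : ℕ) :
    (∑ i ∈ s, (X 0 ^ f i * X 1 ^ g i : MvPolynomial (Fin 2) R)).coeff
      (Finsupp.single 0 a + Finsupp.single 1 b) = #{i ∈ s | f i = a ∧ g i = b} := by
  simp only [coeff_sum, X_pow_eq_monomial, monomial_mul, one_mul, coeff_monomial]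
  rw [sum_boole]
  congr 2
  ext i
  simp [Finsupp.ext_iff, Fin.forall_fin_two]

/-- The coefficients of `M_d(q,t)` and `M_d^±(q,t)` agree in all monomials
`q^a t^b` of total degree `a + b ≤ d`. -/
theorem stmt19 (d a b : ℕ) (h : a + b ≤ d) :
    (MdPoly d).coeff (Finsupp.single 0 a + Finsupp.single 1 b) =
      (MdPMPoly d).coeff (Finsupp.single 0 a + Finsupp.single 1 b) := by
  rw [MdPoly, MdPMPoly, coeff_sum_X_pow_mul_X_pow, coeff_sum_X_pow_mul_X_pow]
  congr 1
  refine card_bij (fun τ _ => (τ, fun _ => false)) (fun τ hτ => ?_)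
    (fun _ _ _ _ hτ => congrArg Prod.fst hτ) (fun ⟨τ, ε⟩ hσ => ?_)
  · simpa [sLenBC_unsigned, sWmaj_unsigned] using hτ
  · obtain ⟨-, hlen, hwmaj⟩ := mem_filter.1 hσ
    obtain rfl : ε = fun _ => false := by
      by_contra hε
      have := lt_sLenBC_add_sWmaj (τ, ε) hε
      omega
    exact ⟨τ, by simpa [sLenBC_unsigned, sWmaj_unsigned] using hσ, rfl⟩
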